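/- For every n ≥ 3, if H attains the maximum spectral radius among all outerplanar 3-uniform hypergraphs on n vertices, then λ(H) ≥ (4(n−1))^{1/3}·(1 − 1/(n−1)). -/
import Mathlib


open Finset

/-- `c` lies strictly inside the clockwise open arc from `a` to `b` on the cycle `ZMod n`. -/
def between (n : ℕ) (a b c : ZMod n) : Prop :=
  0 < (c - a).val ∧ (c - a).val < (b - a).val

/-- The 2-subsets `{a,b}` and `{c,d}` (with `a,b,c,d` distinct) cross: `c` and `d` lie in
different open arcs of the cycle determined by `a` and `b`. -/
def pairCross (n : ℕ) (a b c d : ZMod n) : Prop :=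
  (between n a b c ∧ ¬ between n a b d) ∨ (¬ between n a b c ∧ between n a b d)

/-- Two 3-subsets cross if some 2-subset of one crosses some 2-subset of the other. -/
def triCross (n : ℕ) (e f : Finset (ZMod n)) : Prop :=
  ∃ a ∈ e, ∃ b ∈ e, ∃ c ∈ f, ∃ d ∈ f,
    ({a, b, c, d} : Finset (ZMod n)).card = 4 ∧ pairCross n a b c d

/-- A 3-uniform hypergraph on the vertex set `ZMod n` (given by its hyperedge set `E`)
is maximal outerplanar: all edges have size 3, there are `n - 2` of them, and under some
bijection (permutation) of the vertex set with `ZMod n` they are pairwise non-crossing. -/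
def IsMaxOuterplanar (n : ℕ) (E : Finset (Finset (ZMod n))) : Prop :=
  (∀ e ∈ E, e.card = 3) ∧ E.card = n - 2 ∧
  ∃ σ : Equiv.Perm (ZMod n),
    ∀ e ∈ E, ∀ f ∈ E, e ≠ f → ¬ triCross n (e.image σ) (f.image σ)

/-- A 3-uniform hypergraph on `ZMod n` is outerplanar if it is a subhypergraph of a
maximal outerplanar one on the same vertex set. -/
def IsOuterplanar (n : ℕ) (E : Finset (Finset (ZMod n))) : Prop :=
  ∃ E' : Finset (Finset (ZMod n)), E ⊆ E' ∧ IsMaxOuterplanar n E'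

/-- The polynomial form `P_H(x) = 3 ∑_{e ∈ E} ∏_{v ∈ e} x v` of a 3-uniform hypergraph. -/
noncomputable def polyForm (n : ℕ) (E : Finset (Finset (ZMod n))) (x : ZMod n → ℝ) : ℝ :=
  3 * ∑ e ∈ E, ∏ v ∈ e, x v

/-- The spectral radius `λ(H) = max { P_H(x) : x ≥ 0, ∑_v x_v³ = 1 }`. -/
noncomputable def specRad (n : ℕ) (E : Finset (Finset (ZMod n))) : ℝ :=
  sSup {r : ℝ | ∃ x : ZMod n → ℝ,
    (∀ v, 0 ≤ x v) ∧ (∑ᶠ v, (x v) ^ 3) = 1 ∧ r = polyForm n E x}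

/-- `H` attains the maximum spectral radius among all outerplanar 3-uniform hypergraphs
on `n` vertices. -/
def IsExtremal (n : ℕ) (E : Finset (Finset (ZMod n))) : Prop :=
  IsOuterplanar n E ∧ ∀ E' : Finset (Finset (ZMod n)), IsOuterplanar n E' →
    specRad n E' ≤ specRad n E

/-- The fan hypergraph `F_n` on `{0, 1, …, n-1}`, with hyperedges `{0, i, i+1}` for
`1 ≤ i ≤ n - 2`; its shadow is `K₁ + P_{n-1}`. -/
def fanEdges (n : ℕ) : Finset (Finset (ZMod n)) :=
  (Finset.Icc 1 (n - 2)).image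
    (fun i : ℕ => ({0, (i : ZMod n), ((i + 1 : ℕ) : ZMod n)} : Finset (ZMod n)))

/-- The neighbourhood of `v` in the shadow graph of the hypergraph with edge set `E`. -/
def shadowNbrs (n : ℕ) (E : Finset (Finset (ZMod n))) (v : ZMod n) : Set (ZMod n) :=
  {u : ZMod n | u ≠ v ∧ ∃ e ∈ E, v ∈ e ∧ u ∈ e}

/-- The degree of `v` in the shadow graph. -/
noncomputable def shadowDeg (n : ℕ) (E : Finset (Finset (ZMod n))) (v : ZMod n) : ℕ :=
  (shadowNbrs n E v).ncard

/-- The edge set of the shadow graph: all 2-subsets contained in some hyperedge. -/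
def shadowEdges (n : ℕ) (E : Finset (Finset (ZMod n))) : Finset (Finset (ZMod n)) :=
  E.sup (fun e => e.powersetCard 2)


section AuxProof

lemma card4 {α : Type*} [DecidableEq α] {a b c d : α}
    (h : ({a,b,c,d} : Finset α).card = 4) :
    a ≠ b ∧ a ≠ c ∧ a ≠ d ∧ b ≠ c ∧ b ≠ d ∧ c ≠ d := by
  refine ⟨?_,?_,?_,?_,?_,?_⟩ <;> rintro rfl <;> simp at h <;>
    exact absurd h (Nat.ne_of_lt (Nat.lt_succ_of_le Finset.card_le_three))

lemma cast_inj_of_lt {n i j : ℕ} (hi : i < n) (hj : j < n) :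
    ((i : ZMod n) = (j : ZMod n)) ↔ i = j := by
  haveI : NeZero n := ⟨by omega⟩
  constructor
  · intro h
    have := congrArg ZMod.val h
    rwa [ZMod.val_cast_of_lt hi, ZMod.val_cast_of_lt hj] at this
  · rintro rfl; rfl

lemma valsub (n p r : ℕ) (hp : p < n) (hr : r < n) :
    ((r : ZMod n) - (p : ZMod n)).val = if p ≤ r then r - p else n + r - p := by
  haveI : NeZero n := ⟨by omega⟩
  split_ifs with h
  · rw [show (r:ZMod n) - p = ((r - p : ℕ) : ZMod n) by push_cast [h]; ring]
    exact ZMod.val_cast_of_lt (by omega)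
  · rw [show (r:ZMod n) - p = ((n + r - p : ℕ) : ZMod n) by
      push_cast [show p ≤ n + r by omega]
      simp [ZMod.natCast_self]]
    exact ZMod.val_cast_of_lt (by omega)

lemma between_iff (n p q r : ℕ) (hp : p < n) (hq : q < n) (hr : r < n) :
    between n (p : ZMod n) (q : ZMod n) (r : ZMod n) ↔
      (0 < (if p ≤ r then r - p else n + r - p) ∧
        (if p ≤ r then r - p else n + r - p) < (if p ≤ q then q - p else n + q - p)) := by
  unfold between
  rw [valsub n p r hp hr, valsub n p q hp hq]

lemma fan_nocross (n i j : ℕ) (hn : 3 ≤ n) (hi1 : 1 ≤ i) (hi2 : i ≤ n - 2)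
    (hj1 : 1 ≤ j) (hj2 : j ≤ n - 2) (hij : i ≠ j) :
    ¬ triCross n ({0, (i : ZMod n), ((i+1 : ℕ) : ZMod n)} : Finset (ZMod n))
        ({0, (j : ZMod n), ((j+1 : ℕ) : ZMod n)} : Finset (ZMod n)) := by
  rintro ⟨a, ha, b, hb, c, hc, d, hd, h4, hpc⟩
  obtain ⟨hab, hac, had, hbc, hbd, hcd⟩ := card4 h4
  simp only [Finset.mem_insert, Finset.mem_singleton] at ha hb hc hd
  obtain ⟨p, hp, rfl⟩ : ∃ p, (p = 0 ∨ p = i ∨ p = i + 1) ∧ a = ((p : ℕ) : ZMod n) := by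
    rcases ha with rfl | rfl | rfl
    exacts [⟨0, Or.inl rfl, by simp⟩, ⟨i, Or.inr (Or.inl rfl), rfl⟩,
      ⟨i+1, Or.inr (Or.inr rfl), rfl⟩]
  obtain ⟨q, hq, rfl⟩ : ∃ q, (q = 0 ∨ q = i ∨ q = i + 1) ∧ b = ((q : ℕ) : ZMod n) := by
    rcases hb with rfl | rfl | rfl
    exacts [⟨0, Or.inl rfl, by simp⟩, ⟨i, Or.inr (Or.inl rfl), rfl⟩,
      ⟨i+1, Or.inr (Or.inr rfl), rfl⟩]
  obtain ⟨r, hr, rfl⟩ : ∃ r, (r = 0 ∨ r = j ∨ r = j + 1) ∧ c = ((r : ℕ) : ZMod n) := by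
    rcases hc with rfl | rfl | rfl
    exacts [⟨0, Or.inl rfl, by simp⟩, ⟨j, Or.inr (Or.inl rfl), rfl⟩,
      ⟨j+1, Or.inr (Or.inr rfl), rfl⟩]
  obtain ⟨s, hs, rfl⟩ : ∃ s, (s = 0 ∨ s = j ∨ s = j + 1) ∧ d = ((s : ℕ) : ZMod n) := by
    rcases hd with rfl | rfl | rfl
    exacts [⟨0, Or.inl rfl, by simp⟩, ⟨j, Or.inr (Or.inl rfl), rfl⟩,
      ⟨j+1, Or.inr (Or.inr rfl), rfl⟩]
  have hpn : p < n := by omega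
  have hqn : q < n := by omega
  have hrn : r < n := by omega
  have hsn : s < n := by omega
  have hpq : p ≠ q := fun h => hab (by rw [h])
  have hpr : p ≠ r := fun h => hac (by rw [h])
  have hps : p ≠ s := fun h => had (by rw [h])
  have hqr : q ≠ r := fun h => hbc (by rw [h])
  have hqs : q ≠ s := fun h => hbd (by rw [h])
  have hrs : r ≠ s := fun h => hcd (by rw [h])
  unfold pairCross at hpc
  rw [between_iff n p q r hpn hqn hrn, between_iff n p q s hpn hqn hsn] at hpc
  clear hab hac had hbc hbd hcd h4
  rcases hp with rfl | rfl | rfl <;> rcases hq with rfl | rfl | rfl <;>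
    rcases hr with rfl | rfl | rfl <;> rcases hs with rfl | rfl | rfl <;>
    (split_ifs at hpc <;> omega)

lemma fan_mem_nat (n : ℕ) (hn : 3 ≤ n) {i j : ℕ} (hi : i < n) (hj1 : 1 ≤ j) (hj2 : j ≤ n-2)
    (h : (i : ZMod n) ∈ ({0, (j : ZMod n), ((j + 1 : ℕ) : ZMod n)} : Finset (ZMod n))) :
    i = 0 ∨ i = j ∨ i = j + 1 := by
  simp only [Finset.mem_insert, Finset.mem_singleton] at h
  rcases h with h | h | h
  · left; rwa [show (0 : ZMod n) = ((0:ℕ) : ZMod n) by simp, cast_inj_of_lt hi (by omega)] at h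
  · right; left; rwa [cast_inj_of_lt hi (by omega)] at h
  · right; right; rwa [cast_inj_of_lt hi (by omega)] at h

lemma fan_injOn (n : ℕ) (hn : 3 ≤ n) : Set.InjOn
    (fun i : ℕ => ({0, (i : ZMod n), ((i + 1 : ℕ) : ZMod n)} : Finset (ZMod n)))
    (Finset.Icc 1 (n-2)) := by
  intro i hi j hj h
  simp only [Finset.coe_Icc, Set.mem_Icc] at hi hj
  simp only [] at h
  have h1 : (i : ZMod n) ∈ ({0, (j : ZMod n), ((j + 1 : ℕ) : ZMod n)} : Finset (ZMod n)) := by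
    rw [← h]; simp
  have h2 : ((i+1 : ℕ) : ZMod n) ∈ ({0, (j : ZMod n), ((j + 1 : ℕ) : ZMod n)} : Finset (ZMod n)) := by
    rw [← h]; simp
  have := fan_mem_nat n hn (by omega) hj.1 hj.2 h1
  have := fan_mem_nat n hn (by omega) hj.1 hj.2 h2
  omega

lemma fan_card3 (n : ℕ) (hn : 3 ≤ n) {i : ℕ} (hi1 : 1 ≤ i) (hi2 : i ≤ n - 2) :
    ({0, (i : ZMod n), ((i + 1 : ℕ) : ZMod n)} : Finset (ZMod n)).card = 3 := by
  have e1 : (0 : ZMod n) ≠ (i : ZMod n) := by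
    rw [show (0 : ZMod n) = ((0:ℕ) : ZMod n) by simp, Ne, cast_inj_of_lt (by omega) (by omega)]
    omega
  have e2 : (0 : ZMod n) ≠ ((i+1 : ℕ) : ZMod n) := by
    rw [show (0 : ZMod n) = ((0:ℕ) : ZMod n) by simp, Ne, cast_inj_of_lt (by omega) (by omega)]
    omega
  have e3 : (i : ZMod n) ≠ ((i+1 : ℕ) : ZMod n) := by
    rw [Ne, cast_inj_of_lt (by omega) (by omega)]; omega
  rw [Finset.card_insert_of_notMem (by
      simp only [Finset.mem_insert, Finset.mem_singleton, not_or]; exact ⟨e1, e2⟩),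
    Finset.card_insert_of_notMem (by
      simp only [Finset.mem_singleton]; exact e3), Finset.card_singleton]

lemma fanEdges_card (n : ℕ) (hn : 3 ≤ n) : (fanEdges n).card = n - 2 := by
  rw [fanEdges, Finset.card_image_of_injOn (fan_injOn n hn), Nat.card_Icc]
  omega

lemma fan_maxOP (n : ℕ) (hn : 3 ≤ n) : IsMaxOuterplanar n (fanEdges n) := by
  refine ⟨?_, fanEdges_card n hn, 1, ?_⟩
  · intro e he
    simp only [fanEdges, Finset.mem_image, Finset.mem_Icc] at he
    obtain ⟨i, ⟨hi1, hi2⟩, rfl⟩ := he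
    exact fan_card3 n hn hi1 hi2
  · intro e he f hf hef
    simp only [fanEdges, Finset.mem_image, Finset.mem_Icc] at he hf
    obtain ⟨i, ⟨hi1, hi2⟩, rfl⟩ := he
    obtain ⟨j, ⟨hj1, hj2⟩, rfl⟩ := hf
    have hij : i ≠ j := fun h => hef (by rw [h])
    simp only [Equiv.Perm.coe_one, Finset.image_id]
    exact fan_nocross n i j hn hi1 hi2 hj1 hj2 hij

lemma specSet_bdd (n : ℕ) (hn : 3 ≤ n) (E : Finset (Finset (ZMod n))) :
    BddAbove {r : ℝ | ∃ x : ZMod n → ℝ,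
    (∀ v, 0 ≤ x v) ∧ (∑ᶠ v, (x v) ^ 3) = 1 ∧ r = polyForm n E x} := by
  haveI : NeZero n := ⟨by omega⟩
  refine ⟨3 * E.card, ?_⟩
  rintro r ⟨x, hx0, hx1, rfl⟩
  rw [finsum_eq_sum_of_fintype] at hx1
  have hxle : ∀ v, x v ≤ 1 := by
    intro v
    have h1 : x v ^ 3 ≤ 1 := by
      calc x v ^ 3 ≤ ∑ w, x w ^ 3 :=
        Finset.single_le_sum (fun w _ => pow_nonneg (hx0 w) 3) (Finset.mem_univ v)
      _ = 1 := hx1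
    by_contra hv
    push_neg at hv
    have := one_lt_pow₀ hv (by norm_num : (3:ℕ) ≠ 0)
    linarith
  have h2 : ∑ e ∈ E, ∏ v ∈ e, x v ≤ ∑ _e ∈ E, (1:ℝ) :=
    Finset.sum_le_sum (fun e _ => Finset.prod_le_one (fun v _ => hx0 v) (fun v _ => hxle v))
  rw [Finset.sum_const, nsmul_eq_mul, mul_one] at h2
  unfold polyForm
  nlinarith

lemma fan_lb (n : ℕ) (hn : 3 ≤ n) :
    (4 * ((n : ℝ) - 1)) ^ ((1 : ℝ) / 3) * (1 - 1 / ((n : ℝ) - 1)) ≤ specRad n (fanEdges n) := by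
  haveI : NeZero n := ⟨by omega⟩
  have hn3 : (3:ℝ) ≤ (n:ℝ) := by exact_mod_cast hn
  set m : ℝ := (n:ℝ) - 1 with hm_def
  have hm : 2 ≤ m := by simp [hm_def]; linarith
  have hm0 : m ≠ 0 := by linarith
  set a : ℝ := (3⁻¹ : ℝ) ^ (((3:ℕ):ℝ))⁻¹ with ha_def
  set bb : ℝ := (2/(3*m)) ^ (((3:ℕ):ℝ))⁻¹ with hb_def
  have ha0 : 0 ≤ a := Real.rpow_nonneg (by norm_num) _
  have hb0 : 0 ≤ bb := Real.rpow_nonneg (by positivity) _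
  have ha3 : a ^ (3:ℕ) = 3⁻¹ := Real.rpow_inv_natCast_pow (by norm_num) (by norm_num)
  have hb3 : bb ^ (3:ℕ) = 2/(3*m) := Real.rpow_inv_natCast_pow (by positivity) (by norm_num)
  set x : ZMod n → ℝ := fun v => if v = 0 then a else bb with hx_def
  have hsum : (∑ᶠ v, (x v) ^ 3) = 1 := by
    rw [finsum_eq_sum_of_fintype, ← Finset.add_sum_erase _ _ (Finset.mem_univ (0 : ZMod n))]
    have h1 : x 0 = a := by simp [hx_def]
    have h2 : ∑ v ∈ (Finset.univ.erase (0 : ZMod n)), x v ^ 3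
        = ((Finset.univ.erase (0 : ZMod n)).card : ℝ) * bb ^ 3 := by
      rw [Finset.sum_congr rfl (fun v hv => by
        rw [show x v = bb by simp [hx_def, (Finset.mem_erase.mp hv).1]]),
        Finset.sum_const, nsmul_eq_mul]
    rw [h1, h2, Finset.card_erase_of_mem (Finset.mem_univ _), Finset.card_univ, ZMod.card,
      Nat.cast_sub (by omega), Nat.cast_one, ha3, hb3]
    show ((3:ℝ)⁻¹) + ((n:ℝ) - 1) * (2 / (3 * m)) = 1
    rw [← hm_def]
    field_simp
    ring
  have hval : polyForm n (fanEdges n) x = 3 * ((n:ℝ) - 2) * (a * (bb * bb)) := by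
    unfold polyForm fanEdges
    rw [Finset.sum_image (fan_injOn n hn)]
    have hterm : ∀ i ∈ Finset.Icc 1 (n-2),
        (∏ v ∈ ({0, (i : ZMod n), ((i + 1 : ℕ) : ZMod n)} : Finset (ZMod n)), x v)
          = a * (bb * bb) := by
      intro i hi
      simp only [Finset.mem_Icc] at hi
      have e1 : (0 : ZMod n) ≠ (i : ZMod n) := by
        rw [show (0 : ZMod n) = ((0:ℕ) : ZMod n) by simp, Ne,
          cast_inj_of_lt (by omega) (by omega)]
        omega
      have e2 : (0 : ZMod n) ≠ ((i+1 : ℕ) : ZMod n) := by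
        rw [show (0 : ZMod n) = ((0:ℕ) : ZMod n) by simp, Ne,
          cast_inj_of_lt (by omega) (by omega)]
        omega
      have e3 : (i : ZMod n) ≠ ((i+1 : ℕ) : ZMod n) := by
        rw [Ne, cast_inj_of_lt (by omega) (by omega)]; omega
      rw [Finset.prod_insert (by
          simp only [Finset.mem_insert, Finset.mem_singleton, not_or]; exact ⟨e1, e2⟩),
        Finset.prod_insert (by simp only [Finset.mem_singleton]; exact e3),
        Finset.prod_singleton]
      have x1 : x 0 = a := by simp [hx_def]
      have x2 : x (i : ZMod n) = bb := by
        simp only [hx_def]; exact if_neg (Ne.symm e1)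
      have x3 : x ((i+1 : ℕ) : ZMod n) = bb := by
        simp only [hx_def]; exact if_neg (Ne.symm e2)
      rw [x1, x2, x3]
    rw [Finset.sum_congr rfl hterm, Finset.sum_const, nsmul_eq_mul, Nat.card_Icc]
    have : ((n - 2 + 1 - 1 : ℕ) : ℝ) = (n:ℝ) - 2 := by
      rw [show n - 2 + 1 - 1 = n - 2 by omega, Nat.cast_sub (by omega)]; norm_num
    rw [this]; ring
  have hP0 : 0 ≤ 3 * ((n:ℝ) - 2) * (a * (bb * bb)) := by
    have : (0:ℝ) ≤ (n:ℝ) - 2 := by linarith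
    positivity
  have hTP : (4 * ((n : ℝ) - 1)) ^ ((1 : ℝ) / 3) * (1 - 1 / ((n : ℝ) - 1))
      ≤ 3 * ((n:ℝ) - 2) * (a * (bb * bb)) := by
    have h13 : ((1:ℝ)/3) = (((3:ℕ):ℝ))⁻¹ := by norm_num
    apply le_of_pow_le_pow_left₀ (n := 3) (by norm_num) hP0
    have hL : ((4 * ((n : ℝ) - 1)) ^ ((1 : ℝ) / 3) * (1 - 1 / ((n : ℝ) - 1))) ^ (3:ℕ)
        = (4 * m) * (1 - 1/m) ^ (3:ℕ) := by
      rw [mul_pow, h13, Real.rpow_inv_natCast_pow (by linarith) (by norm_num), ← hm_def]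
    have hR : (3 * ((n:ℝ) - 2) * (a * (bb * bb))) ^ (3:ℕ)
        = 27 * ((n:ℝ) - 2)^(3:ℕ) * (a^(3:ℕ)) * ((bb^(3:ℕ))^(2:ℕ)) := by ring
    rw [hL, hR, ha3, hb3]
    have hn2 : (n:ℝ) - 2 = m - 1 := by rw [hm_def]; ring
    rw [hn2]
    have : (4 * m) * (1 - 1/m) ^ (3:ℕ) = 27 * (m-1)^(3:ℕ) * 3⁻¹ * ((2/(3*m))^(2:ℕ)) := by
      field_simp
      ring
    linarith [this.le, this.ge]
  refine le_trans hTP ?_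
  apply le_csSup (specSet_bdd n hn (fanEdges n))
  exact ⟨x, fun v => by by_cases h : v = 0 <;> simp [hx_def, h, ha0, hb0], hsum, hval.symm⟩

end AuxProof

/-- Every extremal outerplanar 3-uniform hypergraph on `n ≥ 3` vertices satisfies
`λ(H) ≥ (4(n-1))^{1/3} (1 - 1/(n-1))`. -/
theorem stmt_1 (n : ℕ) (hn : 3 ≤ n) (E : Finset (Finset (ZMod n)))
    (hE : IsExtremal n E) :
    (4 * ((n : ℝ) - 1)) ^ ((1 : ℝ) / 3) * (1 - 1 / ((n : ℝ) - 1)) ≤ specRad n E := by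
  obtain ⟨_, hmax⟩ := hE
  exact le_trans (fan_lb n hn) (hmax _ ⟨fanEdges n, subset_rfl, fan_maxOP n hn⟩)
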